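/- Let ℋ = ℂ²⊗ℂ²⊗ℂ²⊗ℂ² with the action of Ĝ = SL(2,ℂ)⁴, and let u₁ = e₀₀₀₀+e₁₁₁₁, u₂ = e₀₁₁₀+e₁₀₀₁, u₃ = e₀₁₀₁+e₁₀₁₀. Let λ₁, λ₂ ∈ ℂ with λ₁ ≠ 0, λ₂ ≠ 0 and λ₁ ≠ −λ₂. Then the stabiliser in Ĝ of s = λ₁(u₁−u₂) + λ₂(u₁−u₃) equals {(ε₁A^#, ε₂A^#, ε₃A, A) : A ∈ SL(2,ℂ), ε₁, ε₂, ε₃ ∈ {1,−1}, ε₁ε₂ε₃ = 1}, where for A = [[a,b],[c,d]] one sets A^# = [[d,c],[b,a]]. -/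

import Mathlib

/-- The Hilbert space of four qubits, in coordinates with respect to the basis
`e_{i₁i₂i₃i₄} = e_{i₁} ⊗ e_{i₂} ⊗ e_{i₃} ⊗ e_{i₄}` of `ℂ² ⊗ ℂ² ⊗ ℂ² ⊗ ℂ²`. -/
abbrev H4 : Type := Fin 2 → Fin 2 → Fin 2 → Fin 2 → ℂ

abbrev SL2 := Matrix.SpecialLinearGroup (Fin 2) ℂ

/-- The group `Ĝ = SL(2,ℂ)⁴`. -/
abbrev G4 := SL2 × SL2 × SL2 × SL2

/-- The action of `SL(2,ℂ)⁴` on `ℂ² ⊗ ℂ² ⊗ ℂ² ⊗ ℂ²`, given in coordinates: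
it is the linear extension of `(A,B,C,D)·(v₁⊗v₂⊗v₃⊗v₄) = Av₁⊗Bv₂⊗Cv₃⊗Dv₄`. -/
noncomputable def act (g : G4) (x : H4) : H4 := fun i1 i2 i3 i4 =>
  ∑ j1 : Fin 2, ∑ j2 : Fin 2, ∑ j3 : Fin 2, ∑ j4 : Fin 2,
    g.1 i1 j1 * g.2.1 i2 j2 * g.2.2.1 i3 j3 * g.2.2.2 i4 j4 * x j1 j2 j3 j4

/-- The basis vector `e_{i₁i₂i₃i₄}`. -/
def e (i1 i2 i3 i4 : Fin 2) : H4 := fun j1 j2 j3 j4 =>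
  if j1 = i1 ∧ j2 = i2 ∧ j3 = i3 ∧ j4 = i4 then 1 else 0

noncomputable def u1 : H4 := e 0 0 0 0 + e 1 1 1 1
noncomputable def u2 : H4 := e 0 1 1 0 + e 1 0 0 1
noncomputable def u3 : H4 := e 0 1 0 1 + e 1 0 1 0

/-- For `A = [[a,b],[c,d]]`, `A^# = [[d,c],[b,a]]`. -/
noncomputable def sharp (A : SL2) : SL2 :=
  ⟨!![A.1 1 1, A.1 1 0; A.1 0 1, A.1 0 0], by
    have h := A.2
    rw [Matrix.det_fin_two] at h
    rw [Matrix.det_fin_two_of]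
    linear_combination h⟩

/-!
Write `Z = diag(1, -1)` and read a 2×2 matrix placed on two tensor factors as an element of their
tensor product. Then `s = λ₁ Z₁₄ ⊗ Z₂₃ + λ₂ Z₁₃ ⊗ Z₂₄`, and `(A, B, C, D)` sends it to
`λ₁ (AZDᵀ)₁₄ ⊗ (BZCᵀ)₂₃ + λ₂ (AZCᵀ)₁₃ ⊗ (BZDᵀ)₂₄`, where all four matrices have determinant `-1`.
Comparing coordinates with those of `s`, and taking determinants of 2×2 slices, shows that for
`λ₁, λ₂, λ₁ + λ₂ ≠ 0` the two tensors agree only if `AZDᵀ = BZCᵀ = εZ` and `AZCᵀ = BZDᵀ = ε'Z`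
with `ε, ε' = ±1`. Since `D^# Z Dᵀ = Z` for `D ∈ SL(2,ℂ)`, the equation `XZDᵀ = cZ` has the single
solution `X = c D^#`.
-/

open Matrix

section Tensor

variable {K : Type*} [CommRing K]

def pauliZ : Matrix (Fin 2) (Fin 2) K := !![1, 0; 0, -1]

/-- `α P₁₄ ⊗ Q₂₃ + β S₁₃ ⊗ R₂₄` in coordinates, where a matrix `M` placed on the tensor factors
`a, b` stands for `∑ i j, M i j (e_i)_a ⊗ (e_j)_b`. -/
def pairTensor (α β : K) (P Q S R : Matrix (Fin 2) (Fin 2) K) :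
    Fin 2 → Fin 2 → Fin 2 → Fin 2 → K :=
  fun i j k l => α * (P i l * Q j k) + β * (S i k * R j l)

lemma pairTensor_smul {α β a b c d : K} (hab : a * b = 1) (hcd : c * d = 1)
    (P Q S R : Matrix (Fin 2) (Fin 2) K) :
    pairTensor α β (a • P) (b • Q) (c • S) (d • R) = pairTensor α β P Q S R := by
  funext i j k l
  simp only [pairTensor, Matrix.smul_apply, smul_eq_mul]
  linear_combination α * P i l * Q j k * hab + β * S i k * R j l * hcd

lemma pairTensor_submatrix (α β : K) (P Q S R : Matrix (Fin 2) (Fin 2) K) (σ : Fin 2 → Fin 2) :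
    pairTensor α β (P.submatrix σ σ) (Q.submatrix σ σ) (S.submatrix σ σ) (R.submatrix σ σ) =
      fun i j k l => pairTensor α β P Q S R (σ i) (σ j) (σ k) (σ l) :=
  rfl

lemma pauliZ_submatrix_swap :
    (pauliZ : Matrix (Fin 2) (Fin 2) K).submatrix (Equiv.swap 0 1) (Equiv.swap 0 1) =
      (-1 : K) • pauliZ := by
  ext i j
  fin_cases i <;> fin_cases j <;> simp [pauliZ]

lemma pairTensor_submatrix_swap_eq {α β : K} {P Q S R : Matrix (Fin 2) (Fin 2) K}
    (h : pairTensor α β P Q S R = pairTensor α β pauliZ pauliZ pauliZ pauliZ) :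
    let σ := Equiv.swap (0 : Fin 2) 1
    pairTensor α β (P.submatrix σ σ) (Q.submatrix σ σ) (S.submatrix σ σ) (R.submatrix σ σ) =
      pairTensor α β pauliZ pauliZ pauliZ pauliZ := by
  intro σ
  rw [pairTensor_submatrix, h, ← pairTensor_submatrix, pauliZ_submatrix_swap,
    pairTensor_smul (by norm_num) (by norm_num)]

lemma Matrix.IsDiag.eq_smul_pauliZ {M : Matrix (Fin 2) (Fin 2) K} (hM : M.IsDiag) {c : K}
    (h0 : M 0 0 = c) (h1 : M 1 1 = -c) : M = c • pauliZ := by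
  ext i j
  fin_cases i <;> fin_cases j <;> simp [pauliZ, h0, h1, hM (i := 0) (j := 1) (by decide),
    hM (i := 1) (j := 0) (by decide)]

lemma det_mul_pauliZ_mul_transpose (A D : SpecialLinearGroup (Fin 2) K) :
    ((A : Matrix (Fin 2) (Fin 2) K) * pauliZ * (D : Matrix (Fin 2) (Fin 2) K)ᵀ).det = -1 := by
  simp [det_mul, pauliZ, det_fin_two]

-- Fixing two of the four indices in `h` leaves an identity of 2×2 matrices; these are its
-- determinants.
lemma entry_zero_one_sq_of_pairTensor_eq {α β : K} {P Q S R : Matrix (Fin 2) (Fin 2) K}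
    (hP : P.det = -1) (hQ : Q.det = -1) (hS : S.det = -1) (hR : R.det = -1)
    (h : pairTensor α β P Q S R = pairTensor α β pauliZ pauliZ pauliZ pauliZ) :
    α ^ 2 * P 0 1 ^ 2 = β ^ 2 * (R 0 1 * S 0 1) ∧ α ^ 2 * Q 0 1 ^ 2 = β ^ 2 * (R 0 1 * S 0 1) ∧
      β ^ 2 * S 0 1 ^ 2 = α ^ 2 * (P 0 1 * Q 0 1) ∧
      β ^ 2 * R 0 1 ^ 2 = α ^ 2 * (P 0 1 * Q 0 1) := by
  rw [det_fin_two] at hP hQ hS hR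
  have E (i j k l : Fin 2) := congrFun (congrFun (congrFun (congrFun h i) j) k) l
  have e0010 := E 0 0 1 0
  have e0001 := E 0 0 0 1
  have e0011 := E 0 0 1 1
  have e0101 := E 0 1 0 1
  have e0111 := E 0 1 1 1
  have e1010 := E 1 0 1 0
  have e1011 := E 1 0 1 1
  have e0110 := E 0 1 1 0
  have e1001 := E 1 0 0 1
  simp only [pairTensor, Fin.isValue, pauliZ, of_apply, cons_val', cons_val_zero,
    cons_val_fin_one, mul_one, cons_val_one, mul_zero, add_zero, mul_neg, zero_add,
    neg_zero] at e0010 e0001 e0011 e0101 e0111 e1010 e1011 e0110 e1001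
  refine ⟨?_, ?_, ?_, ?_⟩
  · linear_combination (α * P 0 1 * Q 1 0) * e0011 - (β * S 0 1 * R 0 1) * e0101
      - (α * P 0 1 * Q 1 1) * e0001 + (β * S 0 0 * R 0 1) * e0111 + (α ^ 2 * P 0 1 ^ 2) * hQ
  · linear_combination (α * Q 0 1 * P 1 0) * e0011 - (β * R 0 1 * S 0 1) * e1010
      - (α * Q 0 1 * P 1 1) * e0010 + (β * R 0 0 * S 0 1) * e1011 + (α ^ 2 * Q 0 1 ^ 2) * hP
  · linear_combination (β * S 0 1 * R 1 0) * e0011 - (α * P 0 1 * Q 0 1) * e0110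
      - (β * S 0 1 * R 1 1) * e0010 + (α * P 0 0 * Q 0 1) * e0111 + (β ^ 2 * S 0 1 ^ 2) * hR
  · linear_combination (β * R 0 1 * S 1 0) * e0011 - (α * Q 0 1 * P 0 1) * e1001
      - (β * R 0 1 * S 1 1) * e0001 + (α * Q 0 0 * P 0 1) * e1011 + (β ^ 2 * R 0 1 ^ 2) * hS

end Tensor

section Solutions

variable {K : Type*} [Field K] {α β : K} {P Q S R : Matrix (Fin 2) (Fin 2) K}

lemma entry_zero_one_eq_zero_of_pairTensor_eq [NeZero (2 : K)] (hα : α ≠ 0) (hβ : β ≠ 0)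
    (hαβ : α + β ≠ 0) (hP : P.det = -1) (hQ : Q.det = -1) (hS : S.det = -1) (hR : R.det = -1)
    (h : pairTensor α β P Q S R = pairTensor α β pauliZ pauliZ pauliZ pauliZ) :
    P 0 1 = 0 ∧ Q 0 1 = 0 ∧ S 0 1 = 0 ∧ R 0 1 = 0 := by
  obtain ⟨slicePP, sliceQQ, sliceSS, sliceRR⟩ := entry_zero_one_sq_of_pairTensor_eq hP hQ hS hR h
  have E (i j k l : Fin 2) := congrFun (congrFun (congrFun (congrFun h i) j) k) l
  have e0000 := E 0 0 0 0
  have e0010 := E 0 0 1 0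
  have e0001 := E 0 0 0 1
  have e0011 := E 0 0 1 1
  simp only [pairTensor, Fin.isValue, pauliZ, of_apply, cons_val', cons_val_zero,
    cons_val_fin_one, mul_one, cons_val_one, mul_zero, add_zero] at e0000 e0010 e0001 e0011
  have hP01 : P 0 1 = 0 := by
    by_contra hp
    have hpq : α * P 0 1 + β * Q 0 1 = 0 := by
      have : α * P 0 1 * (α * P 0 1 + β * Q 0 1) = 0 := by
        linear_combination slicePP + β * e0011
      simpa [hα, hp] using this
    have hq : Q 0 1 ≠ 0 := fun hq => by simp [hq, hα, hp] at hpq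
    have hqp : α * Q 0 1 + β * P 0 1 = 0 := by
      have : α * Q 0 1 * (α * Q 0 1 + β * P 0 1) = 0 := by
        linear_combination sliceQQ + β * e0011
      simpa [hα, hq] using this
    obtain rfl : α = β := by
      have : (α - β) * (α + β) * P 0 1 = 0 := by linear_combination α * hpq - β * hqp
      simpa [hp, hαβ, sub_eq_zero] using this
    have hq' : Q 0 1 = -P 0 1 := by
      have : α * (Q 0 1 + P 0 1) = 0 := by linear_combination hqp
      simpa [hα, add_eq_zero_iff_eq_neg] using this
    rw [hq'] at e0010
    have : 2 * α ^ 3 * P 0 1 ^ 2 = 0 := by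
      linear_combination (-α ^ 2 * P 0 1 ^ 2) * e0000 - α ^ 2 * P 0 1 * Q 0 0 * e0010
        + α ^ 2 * S 0 1 * R 0 0 * e0001 + α * R 0 0 * S 0 0 * slicePP
    simp [hα, hp, two_ne_zero] at this
  have hR01 : R 0 1 = 0 := by simpa [hP01, hβ] using sliceRR
  have hS01 : S 0 1 = 0 := by simpa [hP01, hβ] using sliceSS
  have hQ01 : Q 0 1 = 0 := by simpa [hR01, hα] using sliceQQ
  exact ⟨hP01, hQ01, hS01, hR01⟩

lemma isDiag_of_pairTensor_eq [NeZero (2 : K)] (hα : α ≠ 0) (hβ : β ≠ 0) (hαβ : α + β ≠ 0)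
    (hP : P.det = -1) (hQ : Q.det = -1) (hS : S.det = -1) (hR : R.det = -1)
    (h : pairTensor α β P Q S R = pairTensor α β pauliZ pauliZ pauliZ pauliZ) :
    P.IsDiag ∧ Q.IsDiag ∧ S.IsDiag ∧ R.IsDiag := by
  obtain ⟨hP01, hQ01, hS01, hR01⟩ :=
    entry_zero_one_eq_zero_of_pairTensor_eq hα hβ hαβ hP hQ hS hR h
  obtain ⟨hP10, hQ10, hS10, hR10⟩ := entry_zero_one_eq_zero_of_pairTensor_eq hα hβ hαβ
    (by rwa [det_submatrix_equiv_self]) (by rwa [det_submatrix_equiv_self])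
    (by rwa [det_submatrix_equiv_self]) (by rwa [det_submatrix_equiv_self])
    (pairTensor_submatrix_swap_eq h)
  simp only [submatrix_apply, Equiv.swap_apply_left, Equiv.swap_apply_right] at hP10 hQ10 hS10 hR10
  refine ⟨?_, ?_, ?_, ?_⟩ <;> intro i j hij <;> fin_cases i <;> fin_cases j <;> simp_all

lemma eq_smul_pauliZ_of_isDiag (hα : α ≠ 0) (hβ : β ≠ 0) (hαβ : α + β ≠ 0)
    (hP : P.det = -1) (hS : S.det = -1)
    (hPd : P.IsDiag) (hQd : Q.IsDiag) (hSd : S.IsDiag) (hRd : R.IsDiag)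
    (h : pairTensor α β P Q S R = pairTensor α β pauliZ pauliZ pauliZ pauliZ) :
    ∃ ε ε' : K, (ε = 1 ∨ ε = -1) ∧ (ε' = 1 ∨ ε' = -1) ∧
      P = ε • pauliZ ∧ Q = ε • pauliZ ∧ S = ε' • pauliZ ∧ R = ε' • pauliZ := by
  have E (i j k l : Fin 2) := congrFun (congrFun (congrFun (congrFun h i) j) k) l
  have e0000 := E 0 0 0 0
  have e1111 := E 1 1 1 1
  have e0110 := E 0 1 1 0
  have e1001 := E 1 0 0 1
  have e0101 := E 0 1 0 1
  have e1010 := E 1 0 1 0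
  have h01 : (0 : Fin 2) ≠ 1 := by decide
  rw [det_fin_two] at hP hS
  simp only [pairTensor, Fin.isValue, pauliZ, of_apply, cons_val', cons_val_zero,
    cons_val_fin_one, mul_one, cons_val_one, mul_neg, neg_neg, mul_zero, add_zero, zero_add,
    sub_zero, hPd h01, hPd h01.symm, hQd h01, hQd h01.symm, hSd h01, hSd h01.symm, hRd h01,
    hRd h01.symm] at e0000 e1111 e0110 e1001 e0101 e1010 hP hS
  have hPQ : P 0 0 * Q 1 1 = -1 := mul_left_cancel₀ hα (by linear_combination e0110)
  have hQP : P 1 1 * Q 0 0 = -1 := mul_left_cancel₀ hα (by linear_combination e1001)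
  have hSR : S 0 0 * R 1 1 = -1 := mul_left_cancel₀ hβ (by linear_combination e0101)
  have hRS : S 1 1 * R 0 0 = -1 := mul_left_cancel₀ hβ (by linear_combination e1010)
  have hP00 : P 0 0 ≠ 0 := left_ne_zero_of_mul (by rw [hP]; norm_num)
  have hP11 : P 1 1 ≠ 0 := right_ne_zero_of_mul (by rw [hP]; norm_num)
  have hS00 : S 0 0 ≠ 0 := left_ne_zero_of_mul (by rw [hS]; norm_num)
  have hS11 : S 1 1 ≠ 0 := right_ne_zero_of_mul (by rw [hS]; norm_num)
  have hQ00 : Q 0 0 = P 0 0 := mul_left_cancel₀ hP11 (by linear_combination hQP - hP)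
  have hQ11 : Q 1 1 = P 1 1 := mul_left_cancel₀ hP00 (by linear_combination hPQ - hP)
  have hR00 : R 0 0 = S 0 0 := mul_left_cancel₀ hS11 (by linear_combination hRS - hS)
  have hR11 : R 1 1 = S 1 1 := mul_left_cancel₀ hS00 (by linear_combination hSR - hS)
  have hsum0 : α * P 0 0 ^ 2 + β * S 0 0 ^ 2 = α + β := by
    linear_combination e0000 - α * P 0 0 * hQ00 - β * S 0 0 * hR00
  have hsum1 : α * P 1 1 ^ 2 + β * S 1 1 ^ 2 = α + β := by
    linear_combination e1111 - α * P 1 1 * hQ11 - β * S 1 1 * hR11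
  -- With `x = P₀₀²`, `y = S₀₀²` these read `αx + βy = α + β = α/x + β/y`.
  have hP00sq : P 0 0 ^ 2 = 1 := by
    have : α * (α + β) * (P 0 0 ^ 2 - 1) ^ 2 = 0 := by
      linear_combination ((α + β) * P 0 0 ^ 2 - α) * hsum0 + β * (P 0 0 ^ 2 * S 0 0 ^ 2) * hsum1
        - α * β * S 0 0 ^ 2 * (P 0 0 * P 1 1 - 1) * hP
        - β ^ 2 * P 0 0 ^ 2 * (S 0 0 * S 1 1 - 1) * hS
    simpa [hα, hαβ, sub_eq_zero] using this
  have hS00sq : S 0 0 ^ 2 = 1 := mul_left_cancel₀ hβ (by linear_combination hsum0 - α * hP00sq)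
  have hP11v : P 1 1 = -P 0 0 := mul_left_cancel₀ hP00 (by linear_combination hP + hP00sq)
  have hS11v : S 1 1 = -S 0 0 := mul_left_cancel₀ hS00 (by linear_combination hS + hS00sq)
  exact ⟨P 0 0, S 0 0, sq_eq_one_iff.mp hP00sq, sq_eq_one_iff.mp hS00sq,
    hPd.eq_smul_pauliZ rfl hP11v, hQd.eq_smul_pauliZ hQ00 (hQ11.trans hP11v),
    hSd.eq_smul_pauliZ rfl hS11v, hRd.eq_smul_pauliZ hR00 (hR11.trans hS11v)⟩

theorem eq_smul_pauliZ_of_pairTensor_eq [NeZero (2 : K)] (hα : α ≠ 0) (hβ : β ≠ 0)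
    (hαβ : α + β ≠ 0) (hP : P.det = -1) (hQ : Q.det = -1) (hS : S.det = -1) (hR : R.det = -1)
    (h : pairTensor α β P Q S R = pairTensor α β pauliZ pauliZ pauliZ pauliZ) :
    ∃ ε ε' : K, (ε = 1 ∨ ε = -1) ∧ (ε' = 1 ∨ ε' = -1) ∧
      P = ε • pauliZ ∧ Q = ε • pauliZ ∧ S = ε' • pauliZ ∧ R = ε' • pauliZ := by
  obtain ⟨hPd, hQd, hSd, hRd⟩ := isDiag_of_pairTensor_eq hα hβ hαβ hP hQ hS hR h
  exact eq_smul_pauliZ_of_isDiag hα hβ hαβ hP hS hPd hQd hSd hRd h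

end Solutions

lemma sharp_mul_pauliZ_mul_transpose (D : SL2) :
    (sharp D : Matrix (Fin 2) (Fin 2) ℂ) * pauliZ * (D : Matrix (Fin 2) (Fin 2) ℂ)ᵀ = pauliZ := by
  have hD := D.2
  rw [det_fin_two] at hD
  ext i j
  fin_cases i <;> fin_cases j <;> simp [sharp, pauliZ, mul_apply, Fin.sum_univ_two] <;>
    first | linear_combination hD | linear_combination -hD | ring

lemma left_eq_smul_sharp_of_mul_pauliZ_mul_transpose {X : Matrix (Fin 2) (Fin 2) ℂ} {Y : SL2}
    {c : ℂ} (h : X * pauliZ * (Y : Matrix (Fin 2) (Fin 2) ℂ)ᵀ = c • pauliZ) :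
    X = c • (sharp Y : Matrix (Fin 2) (Fin 2) ℂ) := by
  set W : Matrix (Fin 2) (Fin 2) ℂ := ↑(sharp Y)
  have hZ : (pauliZ : Matrix (Fin 2) (Fin 2) ℂ) * pauliZ = 1 := by
    ext i j
    fin_cases i <;> fin_cases j <;> simp [pauliZ]
  have hinv : pauliZ * (Y : Matrix (Fin 2) (Fin 2) ℂ)ᵀ * (pauliZ * W) = 1 := by
    refine mul_eq_one_comm.mp ?_
    rw [← mul_assoc, mul_assoc pauliZ W, ← mul_assoc, mul_assoc, mul_assoc,
      ← mul_assoc W, sharp_mul_pauliZ_mul_transpose, hZ]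
  calc X = X * (pauliZ * (Y : Matrix (Fin 2) (Fin 2) ℂ)ᵀ * (pauliZ * W)) := by
        rw [hinv, mul_one]
    _ = X * pauliZ * (Y : Matrix (Fin 2) (Fin 2) ℂ)ᵀ * (pauliZ * W) := by
        simp only [mul_assoc]
    _ = c • W := by
        rw [h, smul_mul_assoc, ← mul_assoc, hZ, one_mul]

lemma right_eq_smul_sharp_of_mul_pauliZ_mul_transpose {X : SL2} {Y : Matrix (Fin 2) (Fin 2) ℂ}
    {c : ℂ} (h : (X : Matrix (Fin 2) (Fin 2) ℂ) * pauliZ * Yᵀ = c • pauliZ) :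
    Y = c • (sharp X : Matrix (Fin 2) (Fin 2) ℂ) := by
  have hZ : (pauliZ : Matrix (Fin 2) (Fin 2) ℂ)ᵀ = pauliZ := by
    ext i j
    fin_cases i <;> fin_cases j <;> simp [pauliZ]
  apply left_eq_smul_sharp_of_mul_pauliZ_mul_transpose
  simpa [transpose_mul, hZ, mul_assoc] using congrArg transpose h

lemma sharp_eq_smul_of_eq_smul_sharp {A D : SL2} {c : ℂ}
    (h : (A : Matrix (Fin 2) (Fin 2) ℂ) = c • (sharp D : Matrix (Fin 2) (Fin 2) ℂ)) :
    (sharp A : Matrix (Fin 2) (Fin 2) ℂ) = c • (D : Matrix (Fin 2) (Fin 2) ℂ) := by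
  ext i j
  fin_cases i <;> fin_cases j <;> simp [sharp, h]

lemma smul_sub_add_smul_sub_eq_pairTensor (a b : ℂ) :
    a • (u1 - u2) + b • (u1 - u3) = pairTensor a b pauliZ pauliZ pauliZ pauliZ := by
  funext i j k l
  fin_cases i <;> fin_cases j <;> fin_cases k <;> fin_cases l <;>
    simp [u1, u2, u3, e, pairTensor, pauliZ]

lemma act_pairTensor (g : G4) (α β : ℂ) (P Q S R : Matrix (Fin 2) (Fin 2) ℂ) :
    act g (pairTensor α β P Q S R) =
      pairTensor α β (g.1 * P * (g.2.2.2 : Matrix (Fin 2) (Fin 2) ℂ)ᵀ)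
        (g.2.1 * Q * (g.2.2.1 : Matrix (Fin 2) (Fin 2) ℂ)ᵀ)
        (g.1 * S * (g.2.2.1 : Matrix (Fin 2) (Fin 2) ℂ)ᵀ)
        (g.2.1 * R * (g.2.2.2 : Matrix (Fin 2) (Fin 2) ℂ)ᵀ) := by
  funext i j k l
  simp only [act, pairTensor, mul_apply, transpose_apply, Fin.sum_univ_two]
  ring

/-- The stabiliser of `s = λ₁(u₁ - u₂) + λ₂(u₁ - u₃)` in `SL(2,ℂ)⁴`
equals `{(ε₁A^#, ε₂A^#, ε₃A, A) : A ∈ SL(2,ℂ), εᵢ = ±1, ε₁ε₂ε₃ = 1}`. -/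
theorem stabiliser_semisimple_A2 (lam1 lam2 : ℂ)
    (h1 : lam1 ≠ 0) (h2 : lam2 ≠ 0) (h12 : lam1 ≠ -lam2) :
    {g : G4 | act g (lam1 • (u1 - u2) + lam2 • (u1 - u3)) =
        lam1 • (u1 - u2) + lam2 • (u1 - u3)} =
      {g : G4 | ∃ (A : SL2) (e1 e2 e3 : ℂ),
        (e1 = 1 ∨ e1 = -1) ∧ (e2 = 1 ∨ e2 = -1) ∧ (e3 = 1 ∨ e3 = -1) ∧
        e1 * e2 * e3 = 1 ∧
        (g.1 : Matrix (Fin 2) (Fin 2) ℂ) = e1 • ((sharp A : SL2) : Matrix (Fin 2) (Fin 2) ℂ) ∧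
        (g.2.1 : Matrix (Fin 2) (Fin 2) ℂ) = e2 • ((sharp A : SL2) : Matrix (Fin 2) (Fin 2) ℂ) ∧
        (g.2.2.1 : Matrix (Fin 2) (Fin 2) ℂ) = e3 • ((A : SL2) : Matrix (Fin 2) (Fin 2) ℂ) ∧
        g.2.2.2 = A} := by
  have hsum : lam1 + lam2 ≠ 0 := fun h => h12 (eq_neg_of_add_eq_zero_left h)
  ext g
  simp only [Set.mem_ofPred_eq, smul_sub_add_smul_sub_eq_pairTensor, act_pairTensor]
  constructor
  · intro hg
    obtain ⟨ε, ε', hε, hε', hP, -, hS, hR⟩ := eq_smul_pauliZ_of_pairTensor_eq h1 h2 hsum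
      (det_mul_pauliZ_mul_transpose _ _) (det_mul_pauliZ_mul_transpose _ _)
      (det_mul_pauliZ_mul_transpose _ _) (det_mul_pauliZ_mul_transpose _ _) hg
    have hA := left_eq_smul_sharp_of_mul_pauliZ_mul_transpose hP
    have hεε' : (ε * ε' = 1 ∨ ε * ε' = -1) ∧ ε * ε' * (ε * ε') = 1 := by
      rcases hε with rfl | rfl <;> rcases hε' with rfl | rfl <;> norm_num
    refine ⟨g.2.2.2, ε, ε', ε * ε', hε, hε', hεε'.1, hεε'.2, hA,
      left_eq_smul_sharp_of_mul_pauliZ_mul_transpose hR, ?_, rfl⟩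
    rw [right_eq_smul_sharp_of_mul_pauliZ_mul_transpose hS, sharp_eq_smul_of_eq_smul_sharp hA,
      smul_smul, mul_comm]
  · rintro ⟨A, e1, e2, e3, -, -, -, he, hA, hB, hC, rfl⟩
    simp only [hA, hB, hC, transpose_smul, smul_mul_assoc, mul_smul_comm, smul_smul,
      sharp_mul_pauliZ_mul_transpose]
    exact pairTensor_smul (by linear_combination he) (by linear_combination he) _ _ _ _
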